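/- arXiv:2111.06490 — 4 statements merged into one kernel-verified Lean document; each statement's English description precedes it below -/
import Mathlib

section
/- Let Y be an n×n real positive semidefinite matrix, F₀ a real symmetric n×n matrix, and D a diagonal matrix with entries ±1 such that D F₀ D is a Z-matrix (all off-diagonal entries of D F₀ D are nonpositive). Define y ∈ ℝⁿ by y_j = D_{jj} sqrt(Y_{jj}). Then yᵀ F₀ y ≤ trace(F₀ Y). -/
/-!
Conjugating by `D = diagonal d` (an involution) turns `F0` into the Z-matrix `C = D F0 D` and `Y`
into the positive semidefinite `W = D Y D`, which has the same diagonal; then `y = D w` with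
`w j = √(W j j)`, and the claim becomes `∑ C i j w i w j ≤ ∑ C i j W j i`. This holds term by term:
the diagonal terms agree, and off the diagonal `C i j ≤ 0` while `W j i ≤ w i w j` because the
principal `2 × 2` minors of `W` are nonnegative.
-/

open Matrix

namespace Matrix

variable {ι : Type*}

def IsZMatrix (C : Matrix ι ι ℝ) : Prop := ∀ i j, i ≠ j → C i j ≤ 0

lemma PosSemidef.apply_sq_le_mul_diag {W : Matrix ι ι ℝ} (hW : W.PosSemidef) (i j : ι) :
    W i j ^ 2 ≤ W i i * W j j := by
  have hdet := (hW.submatrix ![i, j]).det_nonneg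
  have hsymm : W j i = W i j := by simpa using hW.isHermitian.apply i j
  simp only [det_fin_two, submatrix_apply, cons_val_zero, cons_val_one, hsymm] at hdet
  nlinarith

lemma PosSemidef.abs_apply_le_sqrt_mul_sqrt {W : Matrix ι ι ℝ} (hW : W.PosSemidef) (i j : ι) :
    |W i j| ≤ √(W i i) * √(W j j) := by
  rw [← Real.sqrt_mul hW.diag_nonneg]
  exact Real.abs_le_sqrt (hW.apply_sq_le_mul_diag i j)

variable [Fintype ι]

theorem IsZMatrix.dotProduct_mulVec_sqrt_diag_le_trace_mul {C W : Matrix ι ι ℝ}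
    (hC : C.IsZMatrix) (hW : W.PosSemidef) :
    (fun j => √(W j j)) ⬝ᵥ C *ᵥ (fun j => √(W j j)) ≤ trace (C * W) := by
  simp only [trace, diag_apply, mul_apply, dotProduct, mulVec, Finset.mul_sum]
  refine Finset.sum_le_sum fun i _ => Finset.sum_le_sum fun j _ => ?_
  rcases eq_or_ne i j with rfl | hij
  · rw [mul_left_comm, Real.mul_self_sqrt hW.diag_nonneg]
  · calc √(W i i) * (C i j * √(W j j)) = C i j * (√(W j j) * √(W i i)) := by ring
      _ ≤ C i j * W j i := mul_le_mul_of_nonpos_left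
          ((le_abs_self _).trans (hW.abs_apply_le_sqrt_mul_sqrt j i)) (hC i j hij)

lemma mulVec_dotProduct_mulVec_mulVec {R κ : Type*} [CommSemiring R] [Fintype κ]
    (A : Matrix ι κ R) (F : Matrix ι ι R) (w : κ → R) :
    A *ᵥ w ⬝ᵥ F *ᵥ (A *ᵥ w) = w ⬝ᵥ (Aᵀ * F * A) *ᵥ w := by
  rw [mulVec_mulVec, dotProduct_mulVec, dotProduct_mulVec, vecMul_mulVec, Matrix.mul_assoc]

lemma trace_conj_mul_conj_of_mul_self_eq_one {R : Type*} [CommSemiring R] [DecidableEq ι]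
    {D : Matrix ι ι R} (hD : D * D = 1) (F Y : Matrix ι ι R) :
    trace (D * F * D * (D * Y * D)) = trace (F * Y) := by
  rw [show D * F * D * (D * Y * D) = D * F * (D * D) * Y * D by simp only [Matrix.mul_assoc],
    hD, Matrix.mul_one, trace_mul_cycle, ← Matrix.mul_assoc, hD, Matrix.one_mul]

end Matrix

theorem stmt5_general (n : ℕ) (Y F0 : Matrix (Fin n) (Fin n) ℝ)
    (hY : Y.PosSemidef)
    (d : Fin n → ℝ) (hd : ∀ j, d j = 1 ∨ d j = -1)
    (hZ : ∀ i j, i ≠ j → (Matrix.diagonal d * F0 * Matrix.diagonal d) i j ≤ 0)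
    (y : Fin n → ℝ) (hy : ∀ j, y j = d j * Real.sqrt (Y j j)) :
    y ⬝ᵥ F0 *ᵥ y ≤ Matrix.trace (F0 * Y) := by
  set D := diagonal d
  set W := D * Y * D
  have hDD : D * D = 1 := by
    rw [diagonal_mul_diagonal, ← diagonal_one]
    congr 1; funext j; rcases hd j with h | h <;> simp [h]
  have hW : W.PosSemidef := by simpa [D] using hY.conjTranspose_mul_mul_same D
  have hWdiag : ∀ j, W j j = Y j j := fun j => by rcases hd j with h | h <;> simp [W, D, h]
  have hyD : y = D *ᵥ fun j => √(W j j) := by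
    funext j; simp [D, hy, hWdiag, mulVec_diagonal]
  calc y ⬝ᵥ F0 *ᵥ y = (fun j => √(W j j)) ⬝ᵥ (D * F0 * D) *ᵥ fun j => √(W j j) := by
        rw [hyD, mulVec_dotProduct_mulVec_mulVec, diagonal_transpose]
    _ ≤ trace (D * F0 * D * W) := IsZMatrix.dotProduct_mulVec_sqrt_diag_le_trace_mul hZ hW
    _ = trace (F0 * Y) := trace_conj_mul_conj_of_mul_self_eq_one hDD F0 Y

theorem stmt5 (n : ℕ) (Y F0 : Matrix (Fin n) (Fin n) ℝ)
    (hY : Y.PosSemidef) (hF0 : F0.IsSymm)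
    (d : Fin n → ℝ) (hd : ∀ j, d j = 1 ∨ d j = -1)
    (hZ : ∀ i j, i ≠ j → (Matrix.diagonal d * F0 * Matrix.diagonal d) i j ≤ 0)
    (y : Fin n → ℝ) (hy : ∀ j, y j = d j * Real.sqrt (Y j j)) :
    y ⬝ᵥ F0 *ᵥ y ≤ Matrix.trace (F0 * Y) :=
  stmt5_general n Y F0 hY d hd hZ y hy
end

section
/- Let F₀, F₁,...,F_N be real symmetric (p+1)×(p+1) matrices with each F_i (i ≥ 1) diagonal, and suppose there exists Y ⪰ 0 with trace(F₀ Y) < 0 and trace(F_i Y) = ψ_i for all i. If there exists a ±1 diagonal matrix D such that D F₀ D is a Z-matrix, then there exists a vector y ∈ ℝ^{p+1} with yᵀ F₀ y < 0 and yᵀ F_i y = ψ_i for all i. -/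
/-!
Take `yⱼ = dⱼ √Yⱼⱼ`. Then `y yᵀ` has the same diagonal as `Y`, so `yᵀ Fᵢ y = tr (Fᵢ Y) = ψᵢ` for
the diagonal `Fᵢ`. Off the diagonal, `(F₀)ⱼₖ = dⱼ dₖ (D F₀ D)ⱼₖ` with `(D F₀ D)ⱼₖ ≤ 0`, while
`dⱼ dₖ Yₖⱼ ≤ |Yₖⱼ| ≤ √Yⱼⱼ √Yₖₖ = dⱼ dₖ yⱼ yₖ` by the `2 × 2` minors of `Y`. Hence each term of
`yᵀ F₀ y = ∑ (F₀)ⱼₖ yₖ yⱼ` is at most the matching term of `tr (F₀ Y) = ∑ (F₀)ⱼₖ Yₖⱼ`.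
-/

open Matrix

namespace Matrix

variable {ι : Type*}

lemma PosSemidef.abs_apply_le_sqrt_mul_sqrt_s6 {Y : Matrix ι ι ℝ} (hY : Y.PosSemidef) (j k : ι) :
    |Y j k| ≤ √(Y j j) * √(Y k k) := by
  classical
  have hdet := (hY.submatrix ![j, k]).det_nonneg
  have hsymm : Y k j = Y j k := by simpa using hY.1.apply j k
  simp only [det_fin_two, submatrix_apply, cons_val_zero, cons_val_one, hsymm, ← sq] at hdet
  rw [← Real.sqrt_mul hY.diag_nonneg]
  exact Real.abs_le_sqrt (by linarith)

noncomputable def signedSqrtDiag (d : ι → ℝ) (Y : Matrix ι ι ℝ) : ι → ℝ :=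
  fun j => d j * √(Y j j)

variable {d : ι → ℝ} {Y : Matrix ι ι ℝ}

lemma vecMulVec_signedSqrtDiag_apply_self (hd : ∀ j, d j = 1 ∨ d j = -1)
    (hY : ∀ j, 0 ≤ Y j j) (j : ι) :
    vecMulVec (signedSqrtDiag d Y) (signedSqrtDiag d Y) j j = Y j j := by
  rcases hd j with h | h <;>
    simp [vecMulVec_apply, signedSqrtDiag, h, Real.mul_self_sqrt (hY j)]

lemma mul_vecMulVec_signedSqrtDiag_apply_le {A : Matrix ι ι ℝ} (hY : Y.PosSemidef)
    (hd : ∀ j, d j = 1 ∨ d j = -1) {j k : ι} (hZ : d j * A j k * d k ≤ 0) :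
    A j k * vecMulVec (signedSqrtDiag d Y) (signedSqrtDiag d Y) k j ≤ A j k * Y k j := by
  have hsign : d j * d k * Y k j ≤ √(Y j j) * √(Y k k) := by
    refine le_trans ?_ ((hY.abs_apply_le_sqrt_mul_sqrt_s6 k j).trans_eq (mul_comm _ _))
    rcases hd j with h | h <;> rcases hd k with h' | h' <;> simp [h, h', le_abs_self, neg_le_abs]
  have hdd : ∀ i, d i * d i = 1 := fun i => by rcases hd i with h | h <;> simp [h]
  calc A j k * vecMulVec (signedSqrtDiag d Y) (signedSqrtDiag d Y) k j
      = (d j * A j k * d k) * (√(Y j j) * √(Y k k)) := by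
        simp only [vecMulVec_apply, signedSqrtDiag]; ring
    _ ≤ (d j * A j k * d k) * (d j * d k * Y k j) := mul_le_mul_of_nonpos_left hsign hZ
    _ = (d j * d j) * (d k * d k) * (A j k * Y k j) := by ring
    _ = A j k * Y k j := by rw [hdd, hdd, one_mul, one_mul]

variable [Fintype ι]

lemma trace_mul_eq_sum_sum (A B : Matrix ι ι ℝ) : trace (A * B) = ∑ j, ∑ k, A j k * B k j := by
  simp only [trace, diag, mul_apply]

lemma dotProduct_mulVec_eq_trace_mul_vecMulVec (A : Matrix ι ι ℝ) (y : ι → ℝ) :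
    y ⬝ᵥ A *ᵥ y = trace (A * vecMulVec y y) := by
  rw [trace_mul_comm, vecMulVec_mul, trace_vecMulVec, dotProduct_mulVec, dotProduct_comm]

lemma IsDiag.trace_mul_eq_of_diag_eq {A X Y : Matrix ι ι ℝ} (hA : A.IsDiag)
    (hXY : ∀ j, X j j = Y j j) : trace (A * X) = trace (A * Y) := by
  classical
  simp only [trace_mul_eq_sum_sum]
  refine Finset.sum_congr rfl fun j _ => ?_
  rw [Finset.sum_eq_single j (fun k _ hk => by rw [hA hk.symm, zero_mul]) (by simp),
    Finset.sum_eq_single j (fun k _ hk => by rw [hA hk.symm, zero_mul]) (by simp), hXY]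

lemma trace_mul_vecMulVec_signedSqrtDiag_le [DecidableEq ι] {A : Matrix ι ι ℝ}
    (hY : Y.PosSemidef) (hd : ∀ j, d j = 1 ∨ d j = -1)
    (hZ : ∀ j k, j ≠ k → (diagonal d * A * diagonal d) j k ≤ 0) :
    trace (A * vecMulVec (signedSqrtDiag d Y) (signedSqrtDiag d Y)) ≤ trace (A * Y) := by
  rw [trace_mul_eq_sum_sum, trace_mul_eq_sum_sum]
  refine Finset.sum_le_sum fun j _ => Finset.sum_le_sum fun k _ => ?_
  rcases eq_or_ne j k with rfl | hjk
  · rw [vecMulVec_signedSqrtDiag_apply_self hd fun _ => hY.diag_nonneg]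
  · refine mul_vecMulVec_signedSqrtDiag_apply_le hY hd ?_
    simpa [diagonal_mul, mul_diagonal] using hZ j k hjk

end Matrix

theorem stmt6_general (p N : ℕ)
    (F0 : Matrix (Fin (p+1)) (Fin (p+1)) ℝ)
    (F : Fin N → Matrix (Fin (p+1)) (Fin (p+1)) ℝ) (hF : ∀ i, (F i).IsDiag)
    (ψ : Fin N → ℝ)
    (Y : Matrix (Fin (p+1)) (Fin (p+1)) ℝ) (hY : Y.PosSemidef)
    (htr0 : Matrix.trace (F0 * Y) < 0)
    (htri : ∀ i, Matrix.trace (F i * Y) = ψ i)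
    (d : Fin (p+1) → ℝ) (hd : ∀ j, d j = 1 ∨ d j = -1)
    (hZ : ∀ i j, i ≠ j → (Matrix.diagonal d * F0 * Matrix.diagonal d) i j ≤ 0) :
    ∃ y : Fin (p+1) → ℝ, y ⬝ᵥ F0 *ᵥ y < 0 ∧ ∀ i, y ⬝ᵥ (F i) *ᵥ y = ψ i := by
  refine ⟨signedSqrtDiag d Y, ?_, fun i => ?_⟩
  · rw [dotProduct_mulVec_eq_trace_mul_vecMulVec]
    exact (trace_mul_vecMulVec_signedSqrtDiag_le hY hd hZ).trans_lt htr0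
  · rw [dotProduct_mulVec_eq_trace_mul_vecMulVec, ← htri i]
    exact (hF i).trace_mul_eq_of_diag_eq
      (vecMulVec_signedSqrtDiag_apply_self hd fun _ => hY.diag_nonneg)

theorem stmt6 (p N : ℕ)
    (F0 : Matrix (Fin (p+1)) (Fin (p+1)) ℝ) (hF0 : F0.IsSymm)
    (F : Fin N → Matrix (Fin (p+1)) (Fin (p+1)) ℝ) (hF : ∀ i, (F i).IsDiag)
    (ψ : Fin N → ℝ)
    (Y : Matrix (Fin (p+1)) (Fin (p+1)) ℝ) (hY : Y.PosSemidef)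
    (htr0 : Matrix.trace (F0 * Y) < 0)
    (htri : ∀ i, Matrix.trace (F i * Y) = ψ i)
    (d : Fin (p+1) → ℝ) (hd : ∀ j, d j = 1 ∨ d j = -1)
    (hZ : ∀ i j, i ≠ j → (Matrix.diagonal d * F0 * Matrix.diagonal d) i j ≤ 0) :
    ∃ y : Fin (p+1) → ℝ, y ⬝ᵥ F0 *ᵥ y < 0 ∧ ∀ i, y ⬝ᵥ (F i) *ᵥ y = ψ i :=
  stmt6_general p N F0 F hF ψ Y hY htr0 htri d hd hZ
end

section
/- Let h(x) = xᵀAx + 2bᵀx + c be a quadratic function on ℝᵖ with A symmetric. Then h(x) ≥ 0 for all x ∈ ℝᵖ if and only if the extended (p+1)×(p+1) matrix [[A, b],[bᵀ, c]] is positive semidefinite. -/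
/-!
Evaluating the quadratic form of the bordered matrix `[[A, b], [bᵀ, c]]` at `(x, t)` gives the
homogenization `xᵀAx + 2t bᵀx + ct²` of `h`. For `t ≠ 0` this equals `t² h(x / t)`, so it is
nonnegative when `h` is; at `t = 0` nonnegativity follows by continuity in `t`. Conversely `h(x)`
is the value of the form at `(x, 1)`.
-/

open Matrix Filter Topology

namespace Matrix

variable {n R : Type*}

def bordered (A : Matrix n n R) (b : n → R) (c : R) : Matrix (n ⊕ Unit) (n ⊕ Unit) R :=
  fromBlocks A (replicateCol Unit b) (replicateRow Unit b) (of fun _ _ => c)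

theorem IsSymm.bordered {A : Matrix n n R} (hA : A.IsSymm) (b : n → R) (c : R) :
    (A.bordered b c).IsSymm :=
  hA.fromBlocks (transpose_replicateCol b) rfl

variable [Fintype n]

theorem sumElim_dotProduct_bordered_mulVec_sumElim [CommRing R] (A : Matrix n n R) (b : n → R)
    (c : R) (x : n → R) (t : R) :
    Sum.elim x (fun _ : Unit => t) ⬝ᵥ A.bordered b c *ᵥ Sum.elim x (fun _ => t) =
      x ⬝ᵥ A *ᵥ x + 2 * t * (b ⬝ᵥ x) + c * t ^ 2 := by
  have cross : x ⬝ᵥ replicateCol Unit b *ᵥ (fun _ => t) = t * (b ⬝ᵥ x) := by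
    simp [dotProduct, mulVec, Finset.mul_sum, mul_comm, mul_left_comm]
  have corner : (fun _ : Unit => t) ⬝ᵥ
      (replicateRow Unit b *ᵥ x + (of fun _ _ => c : Matrix Unit Unit R) *ᵥ fun _ => t) =
      t * (b ⬝ᵥ x) + c * t ^ 2 := by
    simp only [dotProduct, mulVec, Finset.univ_unique, PUnit.default_eq_unit, Pi.add_apply,
      replicateRow_apply, of_apply, Finset.sum_const, Finset.card_singleton, one_smul]
    ring
  rw [bordered, fromBlocks_mulVec, Sum.elim_comp_inl, Sum.elim_comp_inr,
    sumElim_dotProduct_sumElim, dotProduct_add, cross, corner]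
  ring

theorem dotProduct_bordered_mulVec [CommRing R] (A : Matrix n n R) (b : n → R) (c : R)
    (v : n ⊕ Unit → R) :
    v ⬝ᵥ A.bordered b c *ᵥ v =
      (v ∘ Sum.inl) ⬝ᵥ A *ᵥ (v ∘ Sum.inl) + 2 * v (Sum.inr ()) * (b ⬝ᵥ v ∘ Sum.inl) +
        c * v (Sum.inr ()) ^ 2 := by
  rw [← sumElim_dotProduct_bordered_mulVec_sumElim, ← Sum.elim_comp_inl_inr v]
  rfl

theorem homogenization_nonneg_of_forall_nonneg {A : Matrix n n ℝ} {b : n → ℝ} {c : ℝ}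
    (h : ∀ x, 0 ≤ x ⬝ᵥ A *ᵥ x + 2 * (b ⬝ᵥ x) + c) (x : n → ℝ) (t : ℝ) :
    0 ≤ x ⬝ᵥ A *ᵥ x + 2 * t * (b ⬝ᵥ x) + c * t ^ 2 := by
  set F : ℝ → ℝ := fun t => x ⬝ᵥ A *ᵥ x + 2 * t * (b ⬝ᵥ x) + c * t ^ 2
  have dehomogenize : ∀ t ≠ 0, F t = t ^ 2 * ((t⁻¹ • x) ⬝ᵥ A *ᵥ (t⁻¹ • x) +
      2 * (b ⬝ᵥ t⁻¹ • x) + c) := fun t ht => by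
    simp only [F, mulVec_smul, dotProduct_smul, smul_dotProduct, smul_eq_mul]
    field_simp
  have hF : ∀ t ≠ 0, 0 ≤ F t := fun t ht =>
    dehomogenize t ht ▸ mul_nonneg (sq_nonneg t) (h _)
  rcases ne_or_eq t 0 with ht | rfl
  · exact hF t ht
  · have hlim : Tendsto F (𝓝[≠] 0) (𝓝 (F 0)) :=
      ((show Continuous F by fun_prop).tendsto 0).mono_left nhdsWithin_le_nhds
    exact ge_of_tendsto hlim (eventually_nhdsWithin_of_forall hF)

theorem posSemidef_bordered_iff {A : Matrix n n ℝ} (hA : A.IsSymm) (b : n → ℝ) (c : ℝ) :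
    (A.bordered b c).PosSemidef ↔ ∀ x, 0 ≤ x ⬝ᵥ A *ᵥ x + 2 * (b ⬝ᵥ x) + c := by
  simp only [posSemidef_iff_dotProduct_mulVec, isHermitian_iff_isSymm, star_trivial]
  constructor
  · rintro ⟨-, hform⟩ x
    simpa [sumElim_dotProduct_bordered_mulVec_sumElim] using hform (Sum.elim x fun _ => 1)
  · intro h
    refine ⟨hA.bordered b c, fun v => ?_⟩
    rw [dotProduct_bordered_mulVec]
    exact homogenization_nonneg_of_forall_nonneg h _ _

end Matrix

theorem stmt9 (p : ℕ) (A : Matrix (Fin p) (Fin p) ℝ) (b : Fin p → ℝ) (c : ℝ)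
    (hA : A.IsSymm) :
    (∀ x : Fin p → ℝ, x ⬝ᵥ A *ᵥ x + 2 * (b ⬝ᵥ x) + c ≥ 0) ↔
      (Matrix.fromBlocks A (Matrix.replicateCol Unit b) (Matrix.replicateRow Unit b)
        (Matrix.of fun _ _ => c)).PosSemidef :=
  (posSemidef_bordered_iff hA b c).symm
end

section
/- Let F₀ = [[F̂₀, f₀],[f₀ᵀ, d₀]] and F_i = [[F̂_i, 0],[0ᵀ, e_i]] (i = 1,...,N) be symmetric (p+1)×(p+1) matrices with F̂_i diagonal. Suppose for each i there exists ŝ_i ∈ ℝᵖ with ŝ_iᵀ F̂_i ŝ_i + e_i < 0, and the supports of the ŝ_i do not overlap. If there exists y = (v, 0) ∈ ℝ^{p+1} with vᵀ F̂₀ v < 0 and vᵀ F̂_i v ≤ 0 for all i, then there exists s ∈ ℝᵖ with sᵀ F̂₀ s + 2 f₀ᵀ s + d₀ < 0 and sᵀ F̂_i s + e_i ≤ 0 for all i. -/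
open Matrix

/-!
Put `s = t • v + w` with `w = ∑ j, ε j • ŝ j` and signs `ε j = ±1`. Since the supports of the
`ŝ j` lie in pairwise disjoint blocks and `F̂ i` lives on the block of `ŝ i`, the `i`-th constraint
only sees `ε i • ŝ i`: its value is `t² vᵀF̂ᵢv + t εᵢ (cross term) + ŝᵢᵀF̂ᵢŝᵢ + eᵢ`, and the sign `εᵢ`
is chosen to make the cross term nonpositive, so the constraint holds for every `t ≥ 0`.
The objective is a quadratic in `t` with leading coefficient `vᵀF̂₀v < 0`, hence negative for
large `t`.
-/

theorem exists_nonneg_quadratic_neg {a : ℝ} (ha : a < 0) (b c : ℝ) :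
    ∃ t : ℝ, 0 ≤ t ∧ a * t ^ 2 + b * t + c < 0 := by
  set t := (|b| + |c| + 1) / -a + 1
  have ht1 : 1 ≤ t := le_add_of_nonneg_left (div_nonneg (by positivity) (neg_nonneg.mpr ha.le))
  have hat : a * t = a - (|b| + |c| + 1) := by
    simp only [t]
    field_simp [ha.ne]
    ring
  refine ⟨t, zero_le_one.trans ht1, ?_⟩
  have hlin : a * t + b ≤ -(|c| + 1) := by linarith [le_abs_self b]
  have hnonneg : 0 ≤ -(a * t + b) := by linarith [abs_nonneg c]
  nlinarith [mul_le_mul_of_nonneg_right ht1 hnonneg, le_abs_self c]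

theorem exists_sq_eq_one_mul_nonpos (c : ℝ) : ∃ ε : ℝ, ε ^ 2 = 1 ∧ ε * c ≤ 0 := by
  rcases le_total c 0 with hc | hc
  · exact ⟨1, one_pow 2, by linarith⟩
  · exact ⟨-1, by norm_num, by linarith⟩

section BlockSupport

variable {m n R : Type*} [NonUnitalNonAssocSemiring R]

theorem Matrix.mulVec_eq_zero_of_disjoint [Fintype n] {M : Matrix m n R} {x : n → R} {S : Set n}
    (hM : ∀ j k, M j k ≠ 0 → k ∈ S) (hx : Disjoint (Function.support x) S) : M *ᵥ x = 0 := by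
  funext j
  refine Finset.sum_eq_zero fun k _ => ?_
  by_cases hxk : x k = 0
  · simp [hxk]
  · have : M j k = 0 := by_contra fun h => hx.ne_of_mem hxk (hM j k h) rfl
    simp [this]

theorem Matrix.vecMul_eq_zero_of_disjoint [Fintype m] {M : Matrix m n R} {x : m → R} {S : Set m}
    (hM : ∀ j k, M j k ≠ 0 → j ∈ S) (hx : Disjoint (Function.support x) S) : x ᵥ* M = 0 := by
  funext k
  refine Finset.sum_eq_zero fun j _ => ?_
  by_cases hxj : x j = 0
  · simp [hxj]
  · have : M j k = 0 := by_contra fun h => hx.ne_of_mem hxj (hM j k h) rfl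
    simp [this]

end BlockSupport

section SignedSum

variable {ι n R : Type*} [Fintype ι] [Fintype n] [CommRing R]

theorem Matrix.mulVec_sum_smul_of_ne {M : Matrix n n R} {u : ι → n → R} {i : ι}
    (h : ∀ j, j ≠ i → M *ᵥ u j = 0) (c : ι → R) :
    M *ᵥ ∑ j, c j • u j = c i • M *ᵥ u i := by
  rw [mulVec_sum, Finset.sum_eq_single i (fun j _ hj => by rw [mulVec_smul, h j hj, smul_zero])
    (by simp), mulVec_smul]

theorem Matrix.sum_smul_vecMul_of_ne {M : Matrix n n R} {u : ι → n → R} {i : ι}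
    (h : ∀ j, j ≠ i → u j ᵥ* M = 0) (c : ι → R) :
    (∑ j, c j • u j) ᵥ* M = c i • u i ᵥ* M := by
  rw [sum_vecMul, Finset.sum_eq_single i (fun j _ hj => by rw [smul_vecMul, h j hj, smul_zero])
    (by simp), smul_vecMul]

theorem Matrix.smul_add_dotProduct_mulVec_smul_add (M : Matrix n n R) (t : R) (v w : n → R) :
    (t • v + w) ⬝ᵥ M *ᵥ (t • v + w) =
      t ^ 2 * (v ⬝ᵥ M *ᵥ v) + t * (v ⬝ᵥ M *ᵥ w + w ⬝ᵥ M *ᵥ v) + w ⬝ᵥ M *ᵥ w := by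
  simp only [mulVec_add, mulVec_smul, dotProduct_add, add_dotProduct, dotProduct_smul,
    smul_dotProduct, smul_eq_mul]
  ring

theorem Matrix.smul_add_sum_smul_dotProduct_mulVec {M : Matrix n n R} {u : ι → n → R} {i : ι}
    (hr : ∀ j, j ≠ i → M *ᵥ u j = 0) (hl : ∀ j, j ≠ i → u j ᵥ* M = 0)
    (t : R) (v : n → R) (c : ι → R) :
    (t • v + ∑ j, c j • u j) ⬝ᵥ M *ᵥ (t • v + ∑ j, c j • u j) =
      t ^ 2 * (v ⬝ᵥ M *ᵥ v) + t * c i * (v ⬝ᵥ M *ᵥ u i + u i ⬝ᵥ M *ᵥ v) +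
        c i ^ 2 * (u i ⬝ᵥ M *ᵥ u i) := by
  have hw : ∀ x, (∑ j, c j • u j) ⬝ᵥ M *ᵥ x = c i * (u i ⬝ᵥ M *ᵥ x) := fun x => by
    rw [dotProduct_mulVec, sum_smul_vecMul_of_ne hl, smul_dotProduct, smul_eq_mul,
      ← dotProduct_mulVec]
  rw [smul_add_dotProduct_mulVec_smul_add, hw, hw, mulVec_sum_smul_of_ne hr, dotProduct_smul,
    dotProduct_smul, smul_eq_mul, smul_eq_mul]
  ring

end SignedSum

theorem stmt11_general (p N : ℕ)
    (F0hat : Matrix (Fin p) (Fin p) ℝ) (Fhat : Fin N → Matrix (Fin p) (Fin p) ℝ)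
    (f0 : Fin p → ℝ) (d0 : ℝ) (e : Fin N → ℝ)
    (B : Fin N → Set (Fin p))
    (hBdisj : ∀ i j, i ≠ j → Disjoint (B i) (B j))
    (shat : Fin N → Fin p → ℝ)
    (hsupp : ∀ i j, shat i j ≠ 0 → j ∈ B i)
    (hFblock : ∀ i j k, Fhat i j k ≠ 0 → j ∈ B i ∧ k ∈ B i)
    (hslater : ∀ i, shat i ⬝ᵥ (Fhat i) *ᵥ shat i + e i < 0)
    (v : Fin p → ℝ)
    (hv0 : v ⬝ᵥ F0hat *ᵥ v < 0) (hvi : ∀ i, v ⬝ᵥ (Fhat i) *ᵥ v ≤ 0) :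
    ∃ s : Fin p → ℝ, s ⬝ᵥ F0hat *ᵥ s + 2 * (f0 ⬝ᵥ s) + d0 < 0 ∧
      ∀ i, s ⬝ᵥ (Fhat i) *ᵥ s + e i ≤ 0 := by
  have hdisj : ∀ i j, j ≠ i → Disjoint (Function.support (shat j)) (B i) :=
    fun i j hji => (hBdisj j i hji).mono_left (hsupp j)
  have hright : ∀ i j, j ≠ i → Fhat i *ᵥ shat j = 0 := fun i j hji =>
    mulVec_eq_zero_of_disjoint (fun k l h => (hFblock i k l h).2) (hdisj i j hji)
  have hleft : ∀ i j, j ≠ i → shat j ᵥ* Fhat i = 0 := fun i j hji =>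
    vecMul_eq_zero_of_disjoint (fun k l h => (hFblock i k l h).1) (hdisj i j hji)
  choose ε hε_sq hε_cross using fun i =>
    exists_sq_eq_one_mul_nonpos (v ⬝ᵥ Fhat i *ᵥ shat i + shat i ⬝ᵥ Fhat i *ᵥ v)
  set w := ∑ j, ε j • shat j
  obtain ⟨t, ht0, ht⟩ := exists_nonneg_quadratic_neg hv0
    (v ⬝ᵥ F0hat *ᵥ w + w ⬝ᵥ F0hat *ᵥ v + 2 * (f0 ⬝ᵥ v)) (w ⬝ᵥ F0hat *ᵥ w + 2 * (f0 ⬝ᵥ w) + d0)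
  refine ⟨t • v + w, ?_, fun i => ?_⟩
  · rw [smul_add_dotProduct_mulVec_smul_add, dotProduct_add, dotProduct_smul, smul_eq_mul]
    linarith
  · rw [smul_add_sum_smul_dotProduct_mulVec (hright i) (hleft i), hε_sq, mul_assoc]
    nlinarith [mul_nonpos_of_nonneg_of_nonpos ht0 (hε_cross i), hvi i, sq_nonneg t, hslater i]

theorem stmt11 (p N : ℕ)
    (F0hat : Matrix (Fin p) (Fin p) ℝ) (Fhat : Fin N → Matrix (Fin p) (Fin p) ℝ)
    (f0 : Fin p → ℝ) (d0 : ℝ) (e : Fin N → ℝ)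
    (hF0 : F0hat.IsSymm) (hFdiag : ∀ i, (Fhat i).IsDiag)
    (B : Fin N → Set (Fin p))
    (hBdisj : ∀ i j, i ≠ j → Disjoint (B i) (B j))
    (shat : Fin N → Fin p → ℝ)
    (hsupp : ∀ i j, shat i j ≠ 0 → j ∈ B i)
    (hFblock : ∀ i j k, Fhat i j k ≠ 0 → j ∈ B i ∧ k ∈ B i)
    (hslater : ∀ i, shat i ⬝ᵥ (Fhat i) *ᵥ shat i + e i < 0)
    (v : Fin p → ℝ)
    (hv0 : v ⬝ᵥ F0hat *ᵥ v < 0) (hvi : ∀ i, v ⬝ᵥ (Fhat i) *ᵥ v ≤ 0) :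
    ∃ s : Fin p → ℝ, s ⬝ᵥ F0hat *ᵥ s + 2 * (f0 ⬝ᵥ s) + d0 < 0 ∧
      ∀ i, s ⬝ᵥ (Fhat i) *ᵥ s + e i ≤ 0 :=
  stmt11_general p N F0hat Fhat f0 d0 e B hBdisj shat hsupp hFblock hslater v hv0 hvi
end
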